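/- Fixing μ and y_max with μ ≤ y_max, the Expected Improvement EI(σ) = σ·(-u·Φ(-u) + φ(u)) with u = (y_max - μ)/σ is a nondecreasing function of σ > 0. -/

import Mathlib

noncomputable def stdGaussPDF (u : ℝ) : ℝ := (Real.sqrt (2 * Real.pi))⁻¹ * Real.exp (-u ^ 2 / 2)

noncomputable def stdGaussCDF (u : ℝ) : ℝ := ∫ t in Set.Iic u, stdGaussPDF t

/-!
Write `EI(σ) = σ · g(c/σ)` with `c = y_max - μ` and `g(u) = -u Φ(-u) + φ(u)`. Since `φ' = -u φ`
and `φ` is even, `g'(u) = -Φ(-u)`, so the derivative of the perspective `σ ↦ σ g(c/σ)` is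
`g(u) - u g'(u) = φ(u) ≥ 0` at `u = c/σ`.
-/

open Set MeasureTheory

theorem hasDerivAt_integral_Iic {E : Type*} [NormedAddCommGroup E] [NormedSpace ℝ E]
    [CompleteSpace E] {f : ℝ → E} {x : ℝ} (hf : Integrable f) (hx : ContinuousAt f x) :
    HasDerivAt (fun y => ∫ t in Iic y, f t) (f x) x := by
  have hsplit : (fun y => ∫ t in Iic y, f t) =
      fun y => (∫ t in Iic 0, f t) + ∫ t in (0 : ℝ)..y, f t := by
    ext y
    rw [← intervalIntegral.integral_Iic_sub_Iic hf.integrableOn hf.integrableOn]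
    abel
  rw [hsplit]
  exact (intervalIntegral.integral_hasDerivAt_right hf.intervalIntegrable
    hf.aestronglyMeasurable.stronglyMeasurableAtFilter hx).const_add _

theorem hasDerivAt_mul_comp_div {g : ℝ → ℝ} {g' c σ : ℝ} (hσ : σ ≠ 0)
    (hg : HasDerivAt g g' (c / σ)) :
    HasDerivAt (fun s => s * g (c / s)) (g (c / σ) - c / σ * g') σ := by
  have hdiv : HasDerivAt (fun s => c / s) (-(c / σ ^ 2)) σ := by
    simpa [div_eq_mul_inv] using (hasDerivAt_inv hσ).const_mul c
  refine ((hasDerivAt_id' σ).mul (hg.comp σ hdiv)).congr_deriv ?_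
  rw [Function.comp_apply]
  field_simp
  ring

theorem stdGaussPDF_eq_gaussianPDFReal : stdGaussPDF = ProbabilityTheory.gaussianPDFReal 0 1 := by
  ext u
  simp [stdGaussPDF, ProbabilityTheory.gaussianPDFReal]

theorem stdGaussPDF_nonneg (u : ℝ) : 0 ≤ stdGaussPDF u := by
  unfold stdGaussPDF
  positivity

theorem stdGaussPDF_neg (u : ℝ) : stdGaussPDF (-u) = stdGaussPDF u := by
  simp [stdGaussPDF]

theorem hasDerivAt_stdGaussPDF (u : ℝ) : HasDerivAt stdGaussPDF (-u * stdGaussPDF u) u := by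
  have hexponent : HasDerivAt (fun x : ℝ => -x ^ 2 / 2) (-u) u :=
    ((hasDerivAt_pow 2 u).neg.div_const 2).congr_deriv (by ring)
  exact (hexponent.exp.const_mul _).congr_deriv (by simp only [stdGaussPDF]; ring)

theorem hasDerivAt_stdGaussCDF (u : ℝ) : HasDerivAt stdGaussCDF (stdGaussPDF u) u :=
  hasDerivAt_integral_Iic
    (stdGaussPDF_eq_gaussianPDFReal ▸ ProbabilityTheory.integrable_gaussianPDFReal 0 1)
    (hasDerivAt_stdGaussPDF u).continuousAt

noncomputable def stdGaussEI (u : ℝ) : ℝ := -u * stdGaussCDF (-u) + stdGaussPDF u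

theorem hasDerivAt_stdGaussEI (u : ℝ) : HasDerivAt stdGaussEI (-stdGaussCDF (-u)) u := by
  have hcdf := (hasDerivAt_stdGaussCDF (-u)).comp u (hasDerivAt_neg u)
  refine (((hasDerivAt_neg u).mul hcdf).add (hasDerivAt_stdGaussPDF u)).congr_deriv ?_
  rw [stdGaussPDF_neg, Function.comp_apply]
  ring

theorem EI_monotone_in_sigma_general (μ ymax : ℝ) :
    MonotoneOn (fun σ : ℝ =>
      σ * (-(((ymax - μ) / σ)) * stdGaussCDF (-((ymax - μ) / σ))
        + stdGaussPDF ((ymax - μ) / σ))) (Set.Ioi 0) := by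
  have hderiv : ∀ σ ∈ Ioi (0 : ℝ), HasDerivAt (fun s => s * stdGaussEI ((ymax - μ) / s))
      (stdGaussPDF ((ymax - μ) / σ)) σ := fun σ hσ =>
    (hasDerivAt_mul_comp_div hσ.ne' (hasDerivAt_stdGaussEI _)).congr_deriv
      (by simp only [stdGaussEI]; ring)
  show MonotoneOn (fun σ => σ * stdGaussEI ((ymax - μ) / σ)) (Ioi 0)
  refine monotoneOn_of_hasDerivWithinAt_nonneg (f' := fun σ => stdGaussPDF ((ymax - μ) / σ))
    (convex_Ioi 0)
    (fun σ hσ => (hderiv σ hσ).continuousAt.continuousWithinAt) ?_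
    (fun σ _ => stdGaussPDF_nonneg _)
  rw [interior_Ioi]
  exact fun σ hσ => (hderiv σ hσ).hasDerivWithinAt

/-- Fixing `μ ≤ y_max`, the Expected Improvement is a nondecreasing function of `σ > 0`. -/
theorem EI_monotone_in_sigma (μ ymax : ℝ) (h : μ ≤ ymax) :
    MonotoneOn (fun σ : ℝ =>
      σ * (-(((ymax - μ) / σ)) * stdGaussCDF (-((ymax - μ) / σ))
        + stdGaussPDF ((ymax - μ) / σ))) (Set.Ioi 0) :=
  EI_monotone_in_sigma_general μ ymax
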